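/- Fix reals 0 < ρ₁ < ρ₂ and c, c₁, c₂ ∈ ℝ, and set B₁(x₁) = (x₁ − ρ₁)(x₁ − ρ₂)/x₁ and B₂(x₁) = (x₁² − ρ₁ρ₂)/(2x₁²) for x₁ > 0. Consider the desingularized vector field g(x₁, r) = ( B₁(x₁) − c x₁ r − c₁ r, −r (B₂(x₁) − c r − c₂ r²) ) on (0,∞) × ℝ. Then (ρ₁, 0) and (ρ₂, 0) are equilibria of g lying on the horizon {r = 0}, the Jacobian matrix of g at (ρ₁, 0) is the upper triangular matrix with diagonal entries (ρ₁ − ρ₂)/ρ₁ and (ρ₂ − ρ₁)/(2ρ₁) and upper-right entry −cρ₁ − c₁, and the Jacobian matrix of g at (ρ₂, 0) is the upper triangular matrix with diagonal entries (ρ₂ − ρ₁)/ρ₂ and −(ρ₂ − ρ₁)/(2ρ₂) and upper-right entry −cρ₂ − c₁. In particular, at (ρ₁, 0) the eigenvalues satisfy (ρ₁ − ρ₂)/ρ₁ < 0 < (ρ₂ − ρ₁)/(2ρ₁), and at (ρ₂, 0) they satisfy −(ρ₂ − ρ₁)/(2ρ₂) < 0 < (ρ₂ − ρ₁)/ρ₂;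 that is, both equilibria at infinity are hyperbolic saddles. -/

import Mathlib

/-! On the horizon `r = 0` the field reduces to `(B₁(x₁), 0)`, so its equilibria there are the
roots `ρ₁, ρ₂` of `B₁`. Both the `r`-terms of the first component and the whole second component
carry a factor `r`, so at `(a, 0)` they differentiate to their cofactor times `dr`: the Jacobian is
upper triangular with diagonal `B₁'(a) = 1 − ρ₁ρ₂/a²` and `−B₂(a)`, whose signs at `a = ρ₁, ρ₂`
are read off from `ρ₁ < ρ₂`. -/

open ContinuousLinearMap

/-- `B₁(x₁) = (x₁ − ρ₁)(x₁ − ρ₂)/x₁`. -/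
noncomputable def B1 (ρ₁ ρ₂ : ℝ) (x₁ : ℝ) : ℝ := (x₁ - ρ₁) * (x₁ - ρ₂) / x₁

/-- `B₂(x₁) = (x₁² − ρ₁ρ₂)/(2x₁²)`. -/
noncomputable def B2 (ρ₁ ρ₂ : ℝ) (x₁ : ℝ) : ℝ := (x₁ ^ 2 - ρ₁ * ρ₂) / (2 * x₁ ^ 2)

/-- The desingularized two-phase flow vector field
`g(x₁,r) = (B₁(x₁) − cx₁r − c₁r, −r(B₂(x₁) − cr − c₂r²))`. -/
noncomputable def twoFluidG (ρ₁ ρ₂ c c₁ c₂ : ℝ) : ℝ × ℝ → ℝ × ℝ :=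
  fun p =>
    (B1 ρ₁ ρ₂ p.1 - c * p.1 * p.2 - c₁ * p.2,
      -p.2 * (B2 ρ₁ ρ₂ p.1 - c * p.2 - c₂ * p.2 ^ 2))

theorem HasFDerivAt.snd_mul_of_snd_eq_zero {𝕜 E : Type*} [NontriviallyNormedField 𝕜]
    [NormedAddCommGroup E] [NormedSpace 𝕜 E] {P : E × 𝕜 → 𝕜} {p : E × 𝕜}
    (hP : DifferentiableAt 𝕜 P p) (hp : p.2 = 0) :
    HasFDerivAt (fun q : E × 𝕜 => q.2 * P q) (P p • snd 𝕜 E 𝕜) p :=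
  (hasFDerivAt_snd.mul hP.hasFDerivAt).congr_fderiv (by ext <;> simp [hp])

section TwoFluid

variable (ρ₁ ρ₂ c c₁ c₂ : ℝ)

theorem B1_left_root : B1 ρ₁ ρ₂ ρ₁ = 0 := by simp [B1]

theorem B1_right_root : B1 ρ₁ ρ₂ ρ₂ = 0 := by simp [B1]

theorem hasDerivAt_B1 {a : ℝ} (ha : a ≠ 0) :
    HasDerivAt (B1 ρ₁ ρ₂) (1 - ρ₁ * ρ₂ / a ^ 2) a := by
  have h : HasDerivAt (B1 ρ₁ ρ₂)
      (((1 * (a - ρ₂) + (a - ρ₁) * 1) * a - (a - ρ₁) * (a - ρ₂) * 1) / a ^ 2) a :=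
    (((hasDerivAt_id a).sub_const ρ₁).mul ((hasDerivAt_id a).sub_const ρ₂)).div
      (hasDerivAt_id a) ha
  convert h using 1
  field_simp
  ring

theorem differentiableAt_B2 {a : ℝ} (ha : a ≠ 0) : DifferentiableAt ℝ (B2 ρ₁ ρ₂) a := by
  unfold B2
  fun_prop (disch := positivity)

theorem twoFluidG_apply_horizon (x : ℝ) : twoFluidG ρ₁ ρ₂ c c₁ c₂ (x, 0) = (B1 ρ₁ ρ₂ x, 0) := by
  simp [twoFluidG]

theorem hasFDerivAt_twoFluidG_horizon {a : ℝ} (ha : a ≠ 0) :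
    HasFDerivAt (twoFluidG ρ₁ ρ₂ c c₁ c₂)
      (((1 - ρ₁ * ρ₂ / a ^ 2) • fst ℝ ℝ ℝ - (c * a + c₁) • snd ℝ ℝ ℝ).prod
        (-B2 ρ₁ ρ₂ a • snd ℝ ℝ ℝ)) (a, 0) := by
  have hg : twoFluidG ρ₁ ρ₂ c c₁ c₂ = fun q => (B1 ρ₁ ρ₂ q.1 - q.2 * (c * q.1 + c₁),
      q.2 * -(B2 ρ₁ ρ₂ q.1 - c * q.2 - c₂ * q.2 ^ 2)) := by
    funext q; simp only [twoFluidG]; ext <;> ring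
  have hB1 : HasFDerivAt (fun q : ℝ × ℝ => B1 ρ₁ ρ₂ q.1) ((1 - ρ₁ * ρ₂ / a ^ 2) • fst ℝ ℝ ℝ)
      (a, 0) :=
    (hasDerivAt_B1 ρ₁ ρ₂ ha).comp_hasFDerivAt (f := Prod.fst) (a, (0 : ℝ)) hasFDerivAt_fst
  have hB2 : DifferentiableAt ℝ (fun q : ℝ × ℝ => B2 ρ₁ ρ₂ q.1) (a, 0) :=
    (differentiableAt_B2 ρ₁ ρ₂ ha).comp (f := Prod.fst) (a, (0 : ℝ)) differentiableAt_fst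
  rw [hg]
  refine HasFDerivAt.prodMk ?_ ?_
  · exact hB1.sub
      (HasFDerivAt.snd_mul_of_snd_eq_zero (P := fun q => c * q.1 + c₁) (p := (a, 0))
        (by fun_prop) rfl)
  · exact (HasFDerivAt.snd_mul_of_snd_eq_zero
      (P := fun q => -(B2 ρ₁ ρ₂ q.1 - c * q.2 - c₂ * q.2 ^ 2)) (by fun_prop) rfl).congr_fderiv
      (by simp)

theorem fderiv_twoFluidG_horizon_apply {a : ℝ} (ha : a ≠ 0) (u v : ℝ) :
    fderiv ℝ (twoFluidG ρ₁ ρ₂ c c₁ c₂) (a, 0) (u, v) =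
      ((1 - ρ₁ * ρ₂ / a ^ 2) * u - (c * a + c₁) * v, -B2 ρ₁ ρ₂ a * v) := by
  simp [(hasFDerivAt_twoFluidG_horizon ρ₁ ρ₂ c c₁ c₂ ha).fderiv]

end TwoFluid

/-- `(ρ₁,0)` and `(ρ₂,0)` are equilibria of the desingularized two-phase flow
vector field on the horizon `{r = 0}`; the Jacobian matrices there are upper
triangular with the stated entries, and both equilibria are hyperbolic
saddles: one negative and one positive eigenvalue at each point. -/
theorem twoFluid_equilibria_at_infinity_saddles
    (ρ₁ ρ₂ : ℝ) (hρ₁ : 0 < ρ₁) (hρ₁₂ : ρ₁ < ρ₂) (c c₁ c₂ : ℝ) :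
    twoFluidG ρ₁ ρ₂ c c₁ c₂ (ρ₁, 0) = (0, 0) ∧
    twoFluidG ρ₁ ρ₂ c c₁ c₂ (ρ₂, 0) = (0, 0) ∧
    DifferentiableAt ℝ (twoFluidG ρ₁ ρ₂ c c₁ c₂) (ρ₁, 0) ∧
    fderiv ℝ (twoFluidG ρ₁ ρ₂ c c₁ c₂) (ρ₁, 0) (1, 0) = ((ρ₁ - ρ₂) / ρ₁, 0) ∧
    fderiv ℝ (twoFluidG ρ₁ ρ₂ c c₁ c₂) (ρ₁, 0) (0, 1) =
      (-c * ρ₁ - c₁, (ρ₂ - ρ₁) / (2 * ρ₁)) ∧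
    DifferentiableAt ℝ (twoFluidG ρ₁ ρ₂ c c₁ c₂) (ρ₂, 0) ∧
    fderiv ℝ (twoFluidG ρ₁ ρ₂ c c₁ c₂) (ρ₂, 0) (1, 0) = ((ρ₂ - ρ₁) / ρ₂, 0) ∧
    fderiv ℝ (twoFluidG ρ₁ ρ₂ c c₁ c₂) (ρ₂, 0) (0, 1) =
      (-c * ρ₂ - c₁, -(ρ₂ - ρ₁) / (2 * ρ₂)) ∧
    (ρ₁ - ρ₂) / ρ₁ < 0 ∧ 0 < (ρ₂ - ρ₁) / (2 * ρ₁) ∧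
    -(ρ₂ - ρ₁) / (2 * ρ₂) < 0 ∧ 0 < (ρ₂ - ρ₁) / ρ₂ := by
  have hρ₂ : 0 < ρ₂ := hρ₁.trans hρ₁₂
  have hJ₁ := fderiv_twoFluidG_horizon_apply ρ₁ ρ₂ c c₁ c₂ hρ₁.ne'
  have hJ₂ := fderiv_twoFluidG_horizon_apply ρ₁ ρ₂ c c₁ c₂ hρ₂.ne'
  refine ⟨by rw [twoFluidG_apply_horizon, B1_left_root],
    by rw [twoFluidG_apply_horizon, B1_right_root],
    (hasFDerivAt_twoFluidG_horizon ρ₁ ρ₂ c c₁ c₂ hρ₁.ne').differentiableAt, ?_, ?_,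
    (hasFDerivAt_twoFluidG_horizon ρ₁ ρ₂ c c₁ c₂ hρ₂.ne').differentiableAt, ?_, ?_,
    div_neg_of_neg_of_pos (by linarith) hρ₁, by positivity,
    div_neg_of_neg_of_pos (by linarith) (by positivity), by positivity⟩
  all_goals
    simp only [hJ₁, hJ₂, B2]
    ext <;> field_simp <;> ring
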